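/- arXiv:2312.01947 — 9 statements merged into one kernel-verified Lean document; each statement's English description precedes it below -/
import Mathlib

section
/- (Theorem 1) For any ε > 0 and κ > 0, if the sample size satisfies M ≥ χ²/(κ ε² μ₁²), where χ = √(‖O‖² + σ_O²) + √(1 + σ₁²)·‖O‖ + ε·√(1 + σ₁²), then with probability at least 1 − 2κ one has |Ô/1̂ − μ_O/μ₁| ≤ ε. -/
open MeasureTheory ProbabilityTheory
open scoped ENNReal

private lemma stmt0_aux (x y μO μ1 normO a b ε : ℝ) (hμ1 : 0 < μ1) (hnormO : 0 ≤ normO)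
    (ha : 0 < a) (hb : 0 < b) (hε : 0 < ε) (hbound : |μO| ≤ normO * μ1)
    (hkey : a + (normO + ε) * b ≤ ε * μ1) (hbμ : b < μ1)
    (hO : |x - μO| < a) (hI : |y - μ1| < b) : |x / y - μO / μ1| ≤ ε := by
  have hy1 : -b < y - μ1 := neg_lt_of_abs_lt hI
  have hy : 0 < y := by linarith
  have hxy : x / y - μO / μ1 = (x * μ1 - μO * y) / (y * μ1) := by
    field_simp
  rw [hxy, abs_div, abs_of_pos (mul_pos hy hμ1), div_le_iff₀ (mul_pos hy hμ1)]
  have h1 : x * μ1 - μO * y = (x - μO) * μ1 - μO * (y - μ1) := by ring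
  have h2 : |x * μ1 - μO * y| ≤ |x - μO| * μ1 + |μO| * |y - μ1| := by
    rw [h1]
    refine (abs_sub _ _).trans ?_
    rw [abs_mul, abs_mul, abs_of_pos hμ1]
  have h3 : |x - μO| * μ1 ≤ a * μ1 := by nlinarith [abs_nonneg (x - μO)]
  have h4 : |μO| * |y - μ1| ≤ normO * μ1 * b :=
    mul_le_mul hbound hI.le (abs_nonneg _) (by positivity)
  have h6 : a * μ1 + normO * μ1 * b ≤ ε * ((μ1 - b) * μ1) := by
    nlinarith [mul_le_mul_of_nonneg_right hkey hμ1.le]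
  have h5 : ε * ((μ1 - b) * μ1) ≤ ε * (y * μ1) := by
    have h7 : (μ1 - b) * μ1 ≤ y * μ1 :=
      mul_le_mul_of_nonneg_right (by linarith) hμ1.le
    exact mul_le_mul_of_nonneg_left h7 hε.le
  linarith

set_option maxHeartbeats 2000000 in
/-- (Theorem 1) Let `Ô, 1̂` be real random variables with means `μ_O` and `μ₁ > 0`,
variances bounded by `(‖O‖² + σ_O²)/M` and `(1 + σ₁²)/M`, and `|μ_O| ≤ ‖O‖·μ₁`.
For any `ε, κ > 0`, if `M ≥ χ²/(κ ε² μ₁²)` where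
`χ = √(‖O‖² + σ_O²) + √(1 + σ₁²)·‖O‖ + ε·√(1 + σ₁²)`, then
`|Ô/1̂ − μ_O/μ₁| ≤ ε` with probability at least `1 − 2κ`. -/
theorem stmt0 {Ω : Type*} [MeasureSpace Ω] [IsProbabilityMeasure (ℙ : Measure Ω)]
    (Ohat Ihat : Ω → ℝ) (hO2 : MemLp Ohat 2 ℙ) (hI2 : MemLp Ihat 2 ℙ)
    (μO μ1 normO σO σ1 M ε κ : ℝ)
    (hμ1 : 0 < μ1) (hnormO : 0 ≤ normO) (hσO : 0 ≤ σO) (hσ1 : 0 ≤ σ1)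
    (hM : 0 < M) (hε : 0 < ε) (hκ : 0 < κ)
    (hmeanO : ∫ ω, Ohat ω ∂ℙ = μO)
    (hmeanI : ∫ ω, Ihat ω ∂ℙ = μ1)
    (hvarO : variance Ohat ℙ ≤ (normO ^ 2 + σO ^ 2) / M)
    (hvarI : variance Ihat ℙ ≤ (1 + σ1 ^ 2) / M)
    (hbound : |μO| ≤ normO * μ1)
    (hMge : (Real.sqrt (normO ^ 2 + σO ^ 2) + Real.sqrt (1 + σ1 ^ 2) * normO +
        ε * Real.sqrt (1 + σ1 ^ 2)) ^ 2 / (κ * ε ^ 2 * μ1 ^ 2) ≤ M) :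
    ENNReal.ofReal (1 - 2 * κ) ≤
      ℙ {ω | |Ohat ω / Ihat ω - μO / μ1| ≤ ε} := by
  set A : ℝ := normO ^ 2 + σO ^ 2 with hAdef
  set B : ℝ := 1 + σ1 ^ 2 with hBdef
  have hA : 0 ≤ A := by positivity
  have hB : 0 < B := by positivity
  rcases eq_or_lt_of_le hA with hA0 | hA0
  · -- degenerate case: A = 0, so Ohat = 0 a.e.
    have hnO : normO = 0 := by nlinarith [sq_nonneg normO, sq_nonneg σO]
    have hμO : μO = 0 := by
      have := hbound
      rw [hnO, zero_mul] at this
      exact abs_eq_zero.mp (le_antisymm this (abs_nonneg _))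
    have hvar0 : variance Ohat ℙ = 0 := by
      refine le_antisymm ?_ (variance_nonneg _ _)
      calc variance Ohat ℙ ≤ A / M := hvarO
        _ = 0 := by rw [← hA0, zero_div]
    have hev0 : evariance Ohat ℙ = 0 := by
      rw [← hO2.ofReal_variance_eq, hvar0, ENNReal.ofReal_zero]
    have hae : ∀ᵐ ω ∂ℙ, Ohat ω = 0 := by
      have := (evariance_eq_zero_iff hO2.aestronglyMeasurable.aemeasurable).mp hev0
      filter_upwards [this] with ω hω
      rw [hω, hmeanO, hμO]
    have haeP : ∀ᵐ ω ∂ℙ, |Ohat ω / Ihat ω - μO / μ1| ≤ ε := by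
      filter_upwards [hae] with ω hω
      rw [hω, hμO]
      simpa using hε.le
    have h0 : ℙ {ω | ¬ |Ohat ω / Ihat ω - μO / μ1| ≤ ε} = 0 := by
      rw [← ae_iff] at *
      exact haeP
    have h1 : (1 : ℝ≥0∞) ≤ ℙ {ω | |Ohat ω / Ihat ω - μO / μ1| ≤ ε} := by
      have := measure_union_le (μ := ℙ) {ω | |Ohat ω / Ihat ω - μO / μ1| ≤ ε}
        {ω | ¬ |Ohat ω / Ihat ω - μO / μ1| ≤ ε}
      rw [h0, add_zero] at this
      refine le_trans ?_ this
      rw [← measure_univ (μ := (ℙ : Measure Ω))]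
      exact measure_mono fun ω _ => by
        by_cases h : |Ohat ω / Ihat ω - μO / μ1| ≤ ε
        · exact Or.inl h
        · exact Or.inr h
    exact le_trans (ENNReal.ofReal_le_one.mpr (by linarith)) h1
  · -- main case: A > 0
    set χ : ℝ := Real.sqrt A + Real.sqrt B * normO + ε * Real.sqrt B with hχdef
    have hsA : 0 < Real.sqrt A := Real.sqrt_pos.mpr hA0
    have hsB : 0 < Real.sqrt B := Real.sqrt_pos.mpr hB
    have hχ : 0 < χ := by positivity
    have hMκ : 0 < M * κ := mul_pos hM hκ
    set t : ℝ := Real.sqrt (M * κ) with htdef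
    have ht : 0 < t := Real.sqrt_pos.mpr hMκ
    have ht2 : t ^ 2 = M * κ := Real.sq_sqrt hMκ.le
    have hχle : χ ≤ ε * μ1 * t := by
      have h1 : χ ^ 2 ≤ (ε * μ1 * t) ^ 2 := by
        rw [div_le_iff₀ (by positivity)] at hMge
        nlinarith [ht2]
      exact le_of_pow_le_pow_left₀ two_ne_zero (by positivity) h1
    set a : ℝ := Real.sqrt A / t with hadef
    set b : ℝ := Real.sqrt B / t with hbdef
    have ha : 0 < a := by positivity
    have hb : 0 < b := by positivity
    have ha2 : a ^ 2 = A / (M * κ) := by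
      rw [hadef, div_pow, Real.sq_sqrt hA, ht2]
    have hb2 : b ^ 2 = B / (M * κ) := by
      rw [hbdef, div_pow, Real.sq_sqrt hB.le, ht2]
    have hab : a + (normO + ε) * b = χ / t := by
      rw [hadef, hbdef, hχdef]; field_simp; ring
    clear_value χ t a b
    -- Chebyshev for Ohat
    have hcheb1 : ℙ {ω | a ≤ |Ohat ω - μO|} ≤ ENNReal.ofReal κ := by
      have h := meas_ge_le_variance_div_sq hO2 ha
      rw [hmeanO] at h
      refine h.trans (ENNReal.ofReal_le_ofReal ?_)
      rw [div_le_iff₀ (by positivity), ha2]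
      calc variance Ohat ℙ ≤ A / M := hvarO
        _ = κ * (A / (M * κ)) := by field_simp
    have hcheb2 : ℙ {ω | b ≤ |Ihat ω - μ1|} ≤ ENNReal.ofReal κ := by
      have h := meas_ge_le_variance_div_sq hI2 hb
      rw [hmeanI] at h
      refine h.trans (ENNReal.ofReal_le_ofReal ?_)
      rw [div_le_iff₀ (by positivity), hb2]
      calc variance Ihat ℙ ≤ B / M := hvarI
        _ = κ * (B / (M * κ)) := by field_simp
    -- key inequality
    have hkey : a + (normO + ε) * b ≤ ε * μ1 := by
      rw [hab, div_le_iff₀ ht]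
      linarith
    have hbμ : b < μ1 := by
      have h1 : ε * b < ε * μ1 := by nlinarith [mul_nonneg hnormO hb.le]
      exact (mul_lt_mul_iff_right₀ hε).mp h1
    -- pointwise implication
    have hpt : ∀ ω, |Ohat ω - μO| < a → |Ihat ω - μ1| < b →
        |Ohat ω / Ihat ω - μO / μ1| ≤ ε := fun ω hOω hIω =>
      stmt0_aux _ _ _ _ _ _ _ _ hμ1 hnormO ha hb hε hbound hkey hbμ hOω hIω
    -- assemble
    set T := {ω | |Ohat ω / Ihat ω - μO / μ1| ≤ ε}
    set S := {ω | a ≤ |Ohat ω - μO|} ∪ {ω | b ≤ |Ihat ω - μ1|}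
    have hScover : (Set.univ : Set Ω) ⊆ T ∪ S := by
      intro ω _
      by_cases h1 : a ≤ |Ohat ω - μO|
      · exact Or.inr (Or.inl h1)
      by_cases h2 : b ≤ |Ihat ω - μ1|
      · exact Or.inr (Or.inr h2)
      · exact Or.inl (hpt ω (lt_of_not_ge h1) (lt_of_not_ge h2))
    have hSle : ℙ S ≤ ENNReal.ofReal (2 * κ) := by
      refine (measure_union_le _ _).trans ?_
      rw [two_mul, ENNReal.ofReal_add hκ.le hκ.le]
      exact add_le_add hcheb1 hcheb2
    have huniv : (1 : ℝ≥0∞) ≤ ℙ T + ENNReal.ofReal (2 * κ) := by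
      calc (1 : ℝ≥0∞) = ℙ (Set.univ) := (measure_univ (μ := ℙ)).symm
        _ ≤ ℙ (T ∪ S) := measure_mono hScover
        _ ≤ ℙ T + ℙ S := measure_union_le _ _
        _ ≤ ℙ T + ENNReal.ofReal (2 * κ) := add_le_add_right hSle _
    rw [ENNReal.ofReal_sub _ (by positivity), ENNReal.ofReal_one]
    exact tsub_le_iff_right.mpr huniv
end

section
/- (Theorem 2) With probability at least 1 − 2κ, the estimate L̂″ = (Ĥ + η_H)/(1̂ + η₁) lies in the interval min{μ_H/μ₁, 0} ≤ L̂″ ≤ μ_H/μ₁ + 2(η_H + ‖H‖·η₁)/μ₁. -/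
open MeasureTheory ProbabilityTheory

private lemma det_lemma (a b μH μ1 normH ηH η1 : ℝ) (hμ1 : 0 < μ1) (hnormH : 0 ≤ normH)
    (hηH : 0 ≤ ηH) (hη1 : 0 ≤ η1) (hbound : |μH| ≤ normH * μ1)
    (ha : |a - μH| ≤ ηH) (hb : |b - μ1| ≤ η1) :
    min (μH / μ1) 0 ≤ (a + ηH) / (b + η1) ∧
      (a + ηH) / (b + η1) ≤ μH / μ1 + 2 * (ηH + normH * η1) / μ1 := by
  rw [abs_le] at ha hb
  rw [abs_le] at hbound
  have hd : μ1 ≤ b + η1 := by linarith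
  have hd0 : (0:ℝ) < b + η1 := lt_of_lt_of_le hμ1 hd
  have hd2 : b + η1 ≤ μ1 + 2 * η1 := by linarith
  have hnum1 : μH ≤ a + ηH := by linarith
  have hnum2 : a + ηH ≤ μH + 2 * ηH := by linarith
  constructor
  · rw [le_div_iff₀ hd0]
    rcases le_or_gt 0 μH with h | h
    · have : min (μH / μ1) 0 = 0 := min_eq_right (by positivity)
      rw [this]; linarith
    · have h1 : min (μH / μ1) 0 ≤ μH / μ1 := min_le_left _ _
      have h2 : μH / μ1 < 0 := div_neg_of_neg_of_pos h hμ1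
      have h3 : μH / μ1 * μ1 = μH := div_mul_cancel₀ _ hμ1.ne'
      nlinarith [mul_le_mul_of_nonpos_left hd (le_of_lt h2)]
  · have : μH / μ1 + 2 * (ηH + normH * η1) / μ1 = (μH + 2 * (ηH + normH * η1)) / μ1 := by
      ring
    rw [this, div_le_div_iff₀ hd0 hμ1]
    rcases le_or_gt 0 (μH + 2 * (ηH + normH * η1)) with h | h
    · nlinarith
    · nlinarith [mul_le_mul_of_nonpos_left hd2 h.le,
        mul_nonneg hη1 (by linarith : (0:ℝ) ≤ μH + normH * μ1),
        mul_nonneg hη1 hηH, mul_nonneg (mul_nonneg hη1 hnormH) hη1]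

private lemma cheb_lemma {Ω : Type*} [MeasureSpace Ω] [IsProbabilityMeasure (ℙ : Measure Ω)]
    (X : Ω → ℝ) (hX : MemLp X 2 ℙ) (μ c M κ : ℝ) (hc : 0 ≤ c) (hM : 0 < M) (hκ : 0 < κ)
    (hmean : ∫ ω, X ω ∂ℙ = μ) (hvar : variance X ℙ ≤ c / M) :
    ℙ {ω | Real.sqrt (c / (κ * M)) < |X ω - μ|} ≤ ENNReal.ofReal κ := by
  rcases eq_or_lt_of_le hc with h0 | h0
  · -- degenerate case c = 0
    have hs : Real.sqrt (c / (κ * M)) = 0 := by rw [← h0]; simp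
    have hv : variance X ℙ = 0 :=
      le_antisymm (by rw [← h0] at hvar; simpa using hvar) (variance_nonneg _ _)
    have hev : evariance X ℙ = 0 := by
      rw [← hX.ofReal_variance_eq, hv]; simp
    have hae : X =ᵐ[ℙ] fun _ => μ := by
      have := (evariance_eq_zero_iff hX.1.aemeasurable).1 hev
      simpa [hmean] using this
    have hnull : ℙ {ω | X ω ≠ μ} = 0 := by
      have := ae_iff.mp hae
      simpa using this
    rw [hs]
    have : ℙ {ω | 0 < |X ω - μ|} = 0 := by
      refine measure_mono_null (fun ω h => ?_) hnull
      simp only [Set.mem_setOf_eq] at h ⊢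
      intro heq
      rw [heq] at h
      simp at h
    rw [this]
    exact zero_le
  · -- nondegenerate case
    have hη : 0 < Real.sqrt (c / (κ * M)) := Real.sqrt_pos.2 (by positivity)
    calc ℙ {ω | Real.sqrt (c / (κ * M)) < |X ω - μ|}
        ≤ ℙ {ω | Real.sqrt (c / (κ * M)) ≤ |X ω - μ|} :=
          measure_mono (fun ω h => by
            simp only [Set.mem_setOf_eq] at h ⊢; exact le_of_lt h)
      _ ≤ ENNReal.ofReal (variance X ℙ / Real.sqrt (c / (κ * M)) ^ 2) := by
          have := meas_ge_le_variance_div_sq (μ := ℙ) hX hη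
          rwa [hmean] at this
      _ ≤ ENNReal.ofReal κ := by
          apply ENNReal.ofReal_le_ofReal
          rw [Real.sq_sqrt (by positivity)]
          rw [div_le_iff₀ (by positivity)]
          calc variance X ℙ ≤ c / M := hvar
            _ = κ * (c / (κ * M)) := by field_simp

/-- (Theorem 2) Let `Ĥ, 1̂` be real random variables with means `μ_H` and `μ₁ > 0`,
variances bounded by `(‖H‖² + σ_H²)/M` and `(1 + σ₁²)/M`, and `|μ_H| ≤ ‖H‖·μ₁`. For
`κ > 0` set `η_H = √((‖H‖² + σ_H²)/(κM))` and `η₁ = √((1 + σ₁²)/(κM))`. Then with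
probability at least `1 − 2κ`, the estimate `L̂″ = (Ĥ + η_H)/(1̂ + η₁)` satisfies
`min{μ_H/μ₁, 0} ≤ L̂″ ≤ μ_H/μ₁ + 2(η_H + ‖H‖·η₁)/μ₁`. -/
theorem stmt1 {Ω : Type*} [MeasureSpace Ω] [IsProbabilityMeasure (ℙ : Measure Ω)]
    (Hhat Ihat : Ω → ℝ) (hH2 : MemLp Hhat 2 ℙ) (hI2 : MemLp Ihat 2 ℙ)
    (μH μ1 normH σH σ1 M κ : ℝ)
    (hμ1 : 0 < μ1) (hnormH : 0 ≤ normH) (hσH : 0 ≤ σH) (hσ1 : 0 ≤ σ1)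
    (hM : 0 < M) (hκ : 0 < κ)
    (hmeanH : ∫ ω, Hhat ω ∂ℙ = μH)
    (hmeanI : ∫ ω, Ihat ω ∂ℙ = μ1)
    (hvarH : variance Hhat ℙ ≤ (normH ^ 2 + σH ^ 2) / M)
    (hvarI : variance Ihat ℙ ≤ (1 + σ1 ^ 2) / M)
    (hbound : |μH| ≤ normH * μ1)
    (ηH η1 : ℝ)
    (hηH : ηH = Real.sqrt ((normH ^ 2 + σH ^ 2) / (κ * M)))
    (hη1 : η1 = Real.sqrt ((1 + σ1 ^ 2) / (κ * M))) :
    ENNReal.ofReal (1 - 2 * κ) ≤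
      ℙ {ω | min (μH / μ1) 0 ≤ (Hhat ω + ηH) / (Ihat ω + η1) ∧
          (Hhat ω + ηH) / (Ihat ω + η1) ≤ μH / μ1 + 2 * (ηH + normH * η1) / μ1} := by
  have hηH0 : 0 ≤ ηH := hηH ▸ Real.sqrt_nonneg _
  have hη10 : 0 ≤ η1 := hη1 ▸ Real.sqrt_nonneg _
  have hPA : ℙ {ω | ηH < |Hhat ω - μH|} ≤ ENNReal.ofReal κ := by
    rw [hηH]
    exact cheb_lemma Hhat hH2 μH _ M κ (by positivity) hM hκ hmeanH hvarH
  have hPB : ℙ {ω | η1 < |Ihat ω - μ1|} ≤ ENNReal.ofReal κ := by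
    rw [hη1]
    exact cheb_lemma Ihat hI2 μ1 _ M κ (by positivity) hM hκ hmeanI hvarI
  have hsub : ({ω | ηH < |Hhat ω - μH|} ∪ {ω | η1 < |Ihat ω - μ1|})ᶜ ⊆
      {ω | min (μH / μ1) 0 ≤ (Hhat ω + ηH) / (Ihat ω + η1) ∧
          (Hhat ω + ηH) / (Ihat ω + η1) ≤ μH / μ1 + 2 * (ηH + normH * η1) / μ1} := by
    intro ω hω
    simp only [Set.mem_compl_iff, Set.mem_union, Set.mem_setOf_eq, not_or, not_lt] at hω
    exact det_lemma _ _ _ _ _ _ _ hμ1 hnormH hηH0 hη10 hbound hω.1 hω.2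
  calc ENNReal.ofReal (1 - 2 * κ) = 1 - ENNReal.ofReal (2 * κ) := by
        rw [ENNReal.ofReal_sub _ (by positivity), ENNReal.ofReal_one]
    _ ≤ 1 - ℙ ({ω | ηH < |Hhat ω - μH|} ∪ {ω | η1 < |Ihat ω - μ1|}) := by
        apply tsub_le_tsub_left
        calc ℙ ({ω | ηH < |Hhat ω - μH|} ∪ {ω | η1 < |Ihat ω - μ1|})
            ≤ ℙ {ω | ηH < |Hhat ω - μH|} + ℙ {ω | η1 < |Ihat ω - μ1|} :=
              measure_union_le _ _
          _ ≤ ENNReal.ofReal κ + ENNReal.ofReal κ := add_le_add hPA hPB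
          _ = ENNReal.ofReal (2 * κ) := by
              rw [← ENNReal.ofReal_add hκ.le hκ.le]; ring_nf
    _ ≤ ℙ (({ω | ηH < |Hhat ω - μH|} ∪ {ω | η1 < |Ihat ω - μ1|})ᶜ) := by
        rw [tsub_le_iff_right]
        calc (1 : ENNReal) = ℙ (Set.univ : Set Ω) := (measure_univ).symm
          _ = ℙ (({ω | ηH < |Hhat ω - μH|} ∪ {ω | η1 < |Ihat ω - μ1|})ᶜ ∪
                ({ω | ηH < |Hhat ω - μH|} ∪ {ω | η1 < |Ihat ω - μ1|})) := by
              rw [Set.compl_union_self]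
          _ ≤ _ := measure_union_le _ _
    _ ≤ _ := measure_mono hsub
end

section
/- (Deterministic core of Theorem 2) One has min{μ_H/μ₁, 0} ≤ (μ_H + δ_H + η_H)/(μ₁ + δ₁ + η₁) ≤ μ_H/μ₁ + 2(η_H + ‖H‖·η₁)/μ₁. -/
/-- (Deterministic core of Theorem 2) With `μ₁ > 0`, `|μ_H| ≤ ‖H‖·μ₁`, `|δ_H| ≤ η_H`,
`|δ₁| ≤ η₁`, one has
`min{μ_H/μ₁, 0} ≤ (μ_H + δ_H + η_H)/(μ₁ + δ₁ + η₁) ≤ μ_H/μ₁ + 2(η_H + ‖H‖·η₁)/μ₁`. -/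
theorem stmt2 (μH μ1 δH δ1 normH ηH η1 : ℝ)
    (hμ1 : 0 < μ1) (hnormH : 0 ≤ normH) (hbound : |μH| ≤ normH * μ1)
    (hηH : 0 < ηH) (hη1 : 0 < η1) (hδH : |δH| ≤ ηH) (hδ1 : |δ1| ≤ η1) :
    min (μH / μ1) 0 ≤ (μH + δH + ηH) / (μ1 + δ1 + η1) ∧
    (μH + δH + ηH) / (μ1 + δ1 + η1) ≤ μH / μ1 + 2 * (ηH + normH * η1) / μ1 := by
  obtain ⟨hδ1l, hδ1u⟩ := abs_le.mp hδ1
  obtain ⟨hδHl, hδHu⟩ := abs_le.mp hδH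
  obtain ⟨hbl, hbu⟩ := abs_le.mp hbound
  have hD : 0 < μ1 + δ1 + η1 := by linarith
  have hDge : μ1 ≤ μ1 + δ1 + η1 := by linarith
  constructor
  · rcases le_or_gt 0 (μH + δH + ηH) with hN | hN
    · exact le_trans (min_le_right _ _) (div_nonneg hN hD.le)
    · refine le_trans (min_le_left _ _) ?_
      rw [div_le_div_iff₀ hμ1 hD]
      nlinarith [mul_nonneg (by linarith : (0:ℝ) ≤ -(μH + δH + ηH)) (by linarith : (0:ℝ) ≤ δ1 + η1)]
  · have h2 : μH / μ1 + 2 * (ηH + normH * η1) / μ1 = (μH + 2 * (ηH + normH * η1)) / μ1 := by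
      ring
    rw [h2, div_le_div_iff₀ hD hμ1]
    nlinarith [mul_nonneg (by positivity : (0:ℝ) ≤ ηH + normH * η1) (by linarith : (0:ℝ) ≤ δ1 + η1),
      mul_le_mul_of_nonneg_right hbu hη1.le, mul_le_mul_of_nonneg_right hbl hη1.le]
end

section
/- (Core of Theorem 3: Laplace-kernel smoothing approximates the circuit state) For every θ ∈ ℝ^K and every τ > 0, ‖ψ_τ(θ) − φ(θ)‖₂ ≤ Kξ/τ; consequently ‖ψ_τ(θ)‖₂ ≥ 1 − Kξ/τ, and for τ > Kξ the normalized vector ψ_τ(θ)/‖ψ_τ(θ)‖₂ converges to φ(θ) in the ℓ² norm as τ → ∞. -/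
/-!
After the substitution `θ' = θ + x`, the normalised kernel `(τ/2)^K e^{-τ‖x‖₁}` is the product
density `p` of `K` independent Laplace variables, each with `E|X_i| = 1/τ`. Since `∫ p = 1`,
`ψ_τ(θ) - φ(θ) = ∫ p(x) (φ(θ + x) - φ(θ)) dx`, and the Lipschitz bound gives
`‖ψ_τ(θ) - φ(θ)‖ ≤ ξ ∫ p(x) ‖x‖₁ dx = Kξ/τ`. The lower bound on `‖ψ_τ(θ)‖` is the reverse
triangle inequality, and `ψ_τ(θ)/‖ψ_τ(θ)‖ → φ(θ)/‖φ(θ)‖ = φ(θ)` because `ψ_τ(θ) → φ(θ) ≠ 0`.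
-/

open MeasureTheory Set Real Finset

noncomputable def laplaceDensity (τ x : ℝ) : ℝ := τ / 2 * exp (-τ * |x|)

section LaplaceDensity

variable {τ : ℝ}

theorem integral_laplaceDensity (hτ : 0 < τ) : ∫ x, laplaceDensity τ x = 1 := by
  simp only [laplaceDensity]
  rw [integral_comp_abs (f := fun y => τ / 2 * exp (-τ * y)), integral_const_mul,
    integral_exp_mul_Ioi (neg_neg_of_pos hτ)]
  field_simp
  simp

theorem integral_abs_mul_laplaceDensity (hτ : 0 < τ) :
    ∫ x, |x| * laplaceDensity τ x = τ⁻¹ := by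
  have hGamma : ∫ y in Ioi (0 : ℝ), y * exp (-(τ * y)) = (1 / τ) ^ 2 := by
    have := integral_rpow_mul_exp_neg_mul_Ioi two_pos hτ
    norm_num [Real.Gamma_two] at this
    simpa using this
  simp only [laplaceDensity]
  rw [integral_comp_abs (f := fun y => y * (τ / 2 * exp (-τ * y)))]
  simp_rw [mul_left_comm _ (τ / 2), neg_mul, integral_const_mul, hGamma]
  field_simp

theorem integrable_laplaceDensity (hτ : 0 < τ) : Integrable (laplaceDensity τ) :=
  .of_integral_ne_zero (by rw [integral_laplaceDensity hτ]; exact one_ne_zero)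

theorem integrable_abs_mul_laplaceDensity (hτ : 0 < τ) :
    Integrable fun x => |x| * laplaceDensity τ x :=
  .of_integral_ne_zero (by rw [integral_abs_mul_laplaceDensity hτ]; positivity)

end LaplaceDensity

theorem sum_mul_prod_eq_sum_prod_update {ι E R : Type*} [Fintype ι] [DecidableEq ι]
    [CommSemiring R] (f h : E → R) (x : ι → E) :
    (∑ i, h (x i)) * ∏ j, f (x j) =
      ∑ i, ∏ j, Function.update (fun _ => f) i (fun t => h t * f t) j (x j) := by
  rw [sum_mul]
  refine sum_congr rfl fun i _ => ?_
  rw [Fintype.prod_eq_mul_prod_compl i, Fintype.prod_eq_mul_prod_compl i, Function.update_self,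
    mul_assoc]
  congr 2
  exact prod_congr rfl fun j hj => by rw [Function.update_of_ne (by simpa using hj)]

section Product

variable {ι E : Type*} [Fintype ι] [MeasurableSpace E] {μ : Measure E} [SigmaFinite μ]
  {f h : E → ℝ}

theorem integrable_prod_update [DecidableEq ι] (hf : Integrable f μ) (hhf : Integrable (fun t => h t * f t) μ)
    (i : ι) :
    Integrable (fun x : ι → E => ∏ j, Function.update (fun _ => f) i (fun t => h t * f t) j (x j))
      (Measure.pi fun _ => μ) := by
  refine Integrable.fintype_prod fun j => ?_
  rcases eq_or_ne j i with rfl | hji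
  · simpa using hhf
  · simpa [hji] using hf

theorem integrable_sum_mul_prod (hf : Integrable f μ) (hhf : Integrable (fun t => h t * f t) μ) :
    Integrable (fun x : ι → E => (∑ i, h (x i)) * ∏ j, f (x j)) (Measure.pi fun _ => μ) := by
  classical
  simp_rw [sum_mul_prod_eq_sum_prod_update]
  exact integrable_finsetSum _ fun i _ => integrable_prod_update hf hhf i

theorem integral_sum_mul_prod (hf : ∫ t, f t ∂μ = 1) (hhf : Integrable (fun t => h t * f t) μ) :
    ∫ x : ι → E, (∑ i, h (x i)) * ∏ j, f (x j) ∂(Measure.pi fun _ => μ) =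
      Fintype.card ι * ∫ t, h t * f t ∂μ := by
  classical
  have hf_int : Integrable f μ := .of_integral_ne_zero (by rw [hf]; exact one_ne_zero)
  simp_rw [sum_mul_prod_eq_sum_prod_update]
  rw [integral_finsetSum _ fun i _ => integrable_prod_update hf_int hhf i]
  have h_term (i : ι) : ∏ j, ∫ t, Function.update (fun _ => f) i (fun t => h t * f t) j t ∂μ =
      ∫ t, h t * f t ∂μ := by
    rw [Fintype.prod_eq_mul_prod_compl i, Function.update_self,
      prod_eq_one fun j hj => by rw [Function.update_of_ne (by simpa using hj), hf], mul_one]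
  simp_rw [integral_fintype_prod_eq_prod, h_term, sum_const, card_univ, nsmul_eq_mul]

end Product

theorem continuous_of_norm_sub_le_mul_sum_abs {ι F : Type*} [Fintype ι] [SeminormedAddCommGroup F]
    {φ : (ι → ℝ) → F} {ξ : ℝ} (hξ : 0 ≤ ξ)
    (hlip : ∀ θ θ', ‖φ θ' - φ θ‖ ≤ ξ * ∑ i, |θ' i - θ i|) : Continuous φ := by
  refine (LipschitzWith.of_dist_le' (K := ξ * Fintype.card ι) fun a b => ?_).continuous
  calc dist (φ a) (φ b) ≤ ξ * ∑ i, |a i - b i| := by rw [dist_eq_norm]; exact hlip b a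
    _ ≤ ξ * ∑ _i : ι, dist a b := by
      gcongr with i
      exact (Real.dist_eq _ _).symm.trans_le (dist_le_pi_dist a b i)
    _ = ξ * Fintype.card ι * dist a b := by rw [sum_const, card_univ, nsmul_eq_mul, mul_assoc]

section LaplaceAverage

variable {ι E : Type*} [Fintype ι] [NormedAddCommGroup E] [NormedSpace ℝ E]

noncomputable def laplaceAverage (τ : ℝ) (φ : (ι → ℝ) → E) (θ : ι → ℝ) : E :=
  (τ / 2) ^ Fintype.card ι • ∫ θ', exp (-τ * ∑ i, |θ' i - θ i|) • φ θ'

theorem laplaceAverage_eq_integral (τ : ℝ) (φ : (ι → ℝ) → E) (θ : ι → ℝ) :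
    laplaceAverage τ φ θ = ∫ x, (∏ i, laplaceDensity τ (x i)) • φ (θ + x) := by
  rw [laplaceAverage, ← integral_smul, ← integral_add_left_eq_self _ θ]
  refine integral_congr_ae (.of_forall fun x => ?_)
  simp only [smul_smul, laplaceDensity, prod_mul_distrib, prod_const, card_univ, ← exp_sum,
    mul_sum, Pi.add_apply, add_sub_cancel_left]

theorem norm_laplaceAverage_sub_le [CompleteSpace E] {φ : (ι → ℝ) → E} {ξ : ℝ} (hξ : 0 ≤ ξ)
    (hlip : ∀ θ θ', ‖φ θ' - φ θ‖ ≤ ξ * ∑ i, |θ' i - θ i|) (θ : ι → ℝ) {τ : ℝ} (hτ : 0 < τ) :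
    ‖laplaceAverage τ φ θ - φ θ‖ ≤ Fintype.card ι * ξ / τ := by
  set p : (ι → ℝ) → ℝ := fun x => ∏ i, laplaceDensity τ (x i)
  have hp_nonneg (x : ι → ℝ) : 0 ≤ p x := by simp only [p, laplaceDensity]; positivity
  have hp_integral : ∫ x, p x = 1 := by
    rw [integral_fintype_prod_volume_eq_pow, integral_laplaceDensity hτ, one_pow]
  have hp_int : Integrable p := .of_integral_ne_zero (by rw [hp_integral]; exact one_ne_zero)
  have hmoment_int : Integrable fun x : ι → ℝ => (∑ i, |x i|) * p x :=
    integrable_sum_mul_prod (integrable_laplaceDensity hτ) (integrable_abs_mul_laplaceDensity hτ)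
  have hmoment : ∫ x : ι → ℝ, (∑ i, |x i|) * p x = Fintype.card ι * τ⁻¹ := by
    rw [← integral_abs_mul_laplaceDensity hτ]
    exact integral_sum_mul_prod (integral_laplaceDensity hτ) (integrable_abs_mul_laplaceDensity hτ)
  have hφ := continuous_of_norm_sub_le_mul_sum_abs hξ hlip
  have hpointwise (x : ι → ℝ) : ‖p x • (φ (θ + x) - φ θ)‖ ≤ ξ * ((∑ i, |x i|) * p x) := by
    rw [norm_smul, Real.norm_of_nonneg (hp_nonneg x)]
    calc p x * ‖φ (θ + x) - φ θ‖ ≤ p x * (ξ * ∑ i, |(θ + x) i - θ i|) :=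
          mul_le_mul_of_nonneg_left (hlip _ _) (hp_nonneg x)
      _ = ξ * ((∑ i, |x i|) * p x) := by simp only [Pi.add_apply, add_sub_cancel_left]; ring
  have hdiff_int : Integrable fun x => p x • (φ (θ + x) - φ θ) :=
    (hmoment_int.const_mul ξ).mono'
      (hp_int.aestronglyMeasurable.smul ((hφ.comp (continuous_const_add θ)).sub
        continuous_const).aestronglyMeasurable) (.of_forall hpointwise)
  have hconst_int : Integrable fun x => p x • φ θ := hp_int.smul_const _
  calc ‖laplaceAverage τ φ θ - φ θ‖ = ‖∫ x, p x • (φ (θ + x) - φ θ)‖ := by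
        simp_rw [smul_sub]
        rw [integral_sub ((hdiff_int.add hconst_int).congr (.of_forall fun x => by simp [smul_sub]))
          hconst_int, integral_smul_const, hp_integral, one_smul, laplaceAverage_eq_integral]
    _ ≤ ∫ x, ξ * ((∑ i, |x i|) * p x) :=
        norm_integral_le_of_norm_le (hmoment_int.const_mul ξ) (.of_forall hpointwise)
    _ = Fintype.card ι * ξ / τ := by rw [integral_const_mul, hmoment]; ring

end LaplaceAverage

open Filter Topology

theorem stmt5_general (K d : ℕ) (ξ : ℝ) (hξ : 0 < ξ)
    (φ : (Fin K → ℝ) → EuclideanSpace ℂ (Fin d))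
    (hunit : ∀ θ, ‖φ θ‖ = 1)
    (hlip : ∀ θ θ', ‖φ θ' - φ θ‖ ≤ ξ * ∑ i, |θ' i - θ i|)
    (ψ : ℝ → (Fin K → ℝ) → EuclideanSpace ℂ (Fin d))
    (hψ : ∀ τ θ, ψ τ θ =
      (τ / 2) ^ K • ∫ θ' : Fin K → ℝ,
        Real.exp (-τ * ∑ i, |θ' i - θ i|) • φ θ') :
    ∀ θ,
      (∀ τ : ℝ, 0 < τ →
        ‖ψ τ θ - φ θ‖ ≤ K * ξ / τ ∧ 1 - K * ξ / τ ≤ ‖ψ τ θ‖) ∧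
      Filter.Tendsto (fun τ : ℝ => (‖ψ τ θ‖)⁻¹ • ψ τ θ)
        Filter.atTop (nhds (φ θ)) := by
  intro θ
  have hbound (τ : ℝ) (hτ : 0 < τ) : ‖ψ τ θ - φ θ‖ ≤ K * ξ / τ := by
    simpa [hψ, laplaceAverage] using norm_laplaceAverage_sub_le hξ.le hlip θ hτ
  have hlim : Tendsto (fun τ => ψ τ θ) atTop (𝓝 (φ θ)) := by
    refine tendsto_iff_norm_sub_tendsto_zero.2 (squeeze_zero' (.of_forall fun τ => norm_nonneg _)
      ((eventually_gt_atTop 0).mono hbound) ?_)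
    exact tendsto_const_nhds.div_atTop tendsto_id
  refine ⟨fun τ hτ => ⟨hbound τ hτ, ?_⟩, ?_⟩
  · have := norm_sub_norm_le (φ θ) (ψ τ θ)
    rw [hunit, norm_sub_rev] at this
    linarith [hbound τ hτ]
  · simpa [hunit θ] using (hlim.norm.inv₀ (by simp [hunit θ])).smul hlim

/-- (Core of Theorem 3: Laplace-kernel smoothing approximates the circuit state) Let
`φ : ℝ^K → ℂ^d` take unit values and satisfy `‖φ(θ′) − φ(θ)‖₂ ≤ ξ·‖θ′ − θ‖₁`, and let
`ψ_τ(θ) = (τ/2)^K ∫ e^{−τ‖θ′−θ‖₁} φ(θ′) dθ′` be the Laplace-kernel average. Then for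
every `θ` and every `τ > 0`, `‖ψ_τ(θ) − φ(θ)‖₂ ≤ Kξ/τ` and `‖ψ_τ(θ)‖₂ ≥ 1 − Kξ/τ`,
and the normalized vector `ψ_τ(θ)/‖ψ_τ(θ)‖₂` converges to `φ(θ)` as `τ → ∞`. -/
theorem stmt5 (K d : ℕ) (hK : 0 < K) (hd : 0 < d) (ξ : ℝ) (hξ : 0 < ξ)
    (φ : (Fin K → ℝ) → EuclideanSpace ℂ (Fin d))
    (hunit : ∀ θ, ‖φ θ‖ = 1)
    (hlip : ∀ θ θ', ‖φ θ' - φ θ‖ ≤ ξ * ∑ i, |θ' i - θ i|)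
    (ψ : ℝ → (Fin K → ℝ) → EuclideanSpace ℂ (Fin d))
    (hψ : ∀ τ θ, ψ τ θ =
      (τ / 2) ^ K • ∫ θ' : Fin K → ℝ,
        Real.exp (-τ * ∑ i, |θ' i - θ i|) • φ θ') :
    ∀ θ,
      (∀ τ : ℝ, 0 < τ →
        ‖ψ τ θ - φ θ‖ ≤ K * ξ / τ ∧ 1 - K * ξ / τ ≤ ‖ψ τ θ‖) ∧
      Filter.Tendsto (fun τ : ℝ => (‖ψ τ θ‖)⁻¹ • ψ τ θ)
        Filter.atTop (nhds (φ θ)) :=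
  stmt5_general K d ξ hξ φ hunit hlip ψ hψ
end

section
/- (Core of Theorem 4: approximation of arbitrary linear combinations) For every τ > 0, ‖Σ_{i=1}^{m} β_i ψ_τ(θ_i) − φ*‖₂ ≤ (Kξ/τ)·Σ_{i=1}^{m} |β_i|. In particular, if the vectors φ(θ₁), …, φ(θ_m) span ℂ^d, then every vector of ℂ^d is the limit as τ → ∞ of vectors of the form Σ_i β_i ψ_τ(θ_i). -/
open MeasureTheory

open Real Set


lemma myIntegrable_comp_abs {f : ℝ → ℝ} (hf : IntegrableOn f (Ioi 0)) :
    Integrable fun x => f |x| := by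
  have hIoi : IntegrableOn (fun x => f |x|) (Ioi 0) :=
    hf.congr_fun (fun x hx => by rw [abs_of_pos hx]) measurableSet_Ioi |>.congr_fun
      (fun x hx => rfl) measurableSet_Ioi
  have hIic : IntegrableOn (fun x => f |x|) (Iic 0) := by
    rw [← Measure.map_neg_eq_self (volume : Measure ℝ)]
    have m : MeasurableEmbedding fun x : ℝ => -x := (Homeomorph.neg ℝ).measurableEmbedding
    rw [m.integrableOn_map_iff]
    simp_rw [Function.comp_def, abs_neg, neg_preimage, neg_Iic, neg_zero]
    exact (integrableOn_Ici_iff_integrableOn_Ioi (f := fun x => f |x|) (b := 0)).mpr hIoi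
  have h := hIic.union hIoi
  rwa [Iic_union_Ioi, integrableOn_univ] at h

lemma oneD_integrable (s : ℕ) {τ : ℝ} (hτ : 0 < τ) :
    Integrable (fun x : ℝ => |x| ^ s * Real.exp (-(τ * |x|))) := by
  apply myIntegrable_comp_abs (f := fun x => x ^ s * Real.exp (-(τ * x)))
  have h := integrableOn_rpow_mul_exp_neg_mul_rpow (s := (s : ℝ)) (p := 1)
    (neg_one_lt_zero.trans_le (Nat.cast_nonneg s)) one_pos hτ
  apply h.congr_fun ?_ measurableSet_Ioi
  intro x hx
  simp [Real.rpow_natCast, Real.rpow_one, neg_mul]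

lemma oneD_val0 {τ : ℝ} (hτ : 0 < τ) :
    ∫ x : ℝ, Real.exp (-(τ * |x|)) = 2 / τ := by
  rw [integral_comp_abs (f := fun x => Real.exp (-(τ * x)))]
  have h := integral_exp_neg_mul_rpow (p := 1) (b := τ) one_pos hτ
  simp only [Real.rpow_one, neg_mul] at h ⊢
  rw [h]
  norm_num [Real.rpow_neg_one, Real.Gamma_two]
  ring

lemma oneD_val1 {τ : ℝ} (hτ : 0 < τ) :
    ∫ x : ℝ, |x| * Real.exp (-(τ * |x|)) = 2 / τ ^ 2 := by
  rw [integral_comp_abs (f := fun x => x * Real.exp (-(τ * x)))]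
  have h := integral_rpow_mul_exp_neg_mul_rpow (p := 1) (q := 1) (b := τ) one_pos
    (by norm_num) hτ
  simp only [Real.rpow_one, neg_mul] at h ⊢
  rw [h]
  have : ((-(1 + 1) : ℝ) / 1) = ((-2 : ℤ) : ℝ) := by norm_num
  rw [this, Real.rpow_intCast]
  norm_num [Real.Gamma_two]
  rw [eq_div_iff (by positivity)]
  field_simp

lemma main_bound {K d : ℕ} {ξ τ : ℝ} (hξ : 0 ≤ ξ) (hτ : 0 < τ)
    (φ : (Fin K → ℝ) → EuclideanSpace ℂ (Fin d)) (hφc : Continuous φ)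
    (hunit : ∀ θ, ‖φ θ‖ = 1)
    (hlip : ∀ θ θ', ‖φ θ' - φ θ‖ ≤ ξ * ∑ i, |θ' i - θ i|)
    (θ : Fin K → ℝ) :
    ‖((τ / 2) ^ K • ∫ θ' : Fin K → ℝ,
        Real.exp (-τ * ∑ i, |θ' i - θ i|) • φ θ') - φ θ‖ ≤ K * ξ / τ := by
  set g : (Fin K → ℝ) → ℝ := fun x => Real.exp (-τ * ∑ i, |x i - θ i|) with hgdef
  have hone : ((τ / 2 : ℝ)) ^ K * (2 / τ) ^ K = 1 := by
    rw [← mul_pow, div_mul_div_comm, mul_comm, div_self (by positivity), one_pow]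
  -- product form of g
  have hgprod : ∀ x : Fin K → ℝ, g x = ∏ i, Real.exp (-(τ * |x i - θ i|)) := by
    intro x
    show Real.exp (-τ * ∑ i, |x i - θ i|) = _
    rw [neg_mul, Finset.mul_sum, ← Finset.sum_neg_distrib, Real.exp_sum]
  -- integrability of g
  have h0 : Integrable (fun y : ℝ => Real.exp (-(τ * |y|))) := by
    simpa using oneD_integrable 0 hτ
  have hprod_int : Integrable (fun z : Fin K → ℝ => ∏ i, Real.exp (-(τ * |z i|))) :=
    Integrable.fintype_prod (f := fun _ : Fin K => fun y : ℝ => Real.exp (-(τ * |y|)))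
      fun _ => h0
  have hg_eq : g = fun x => (fun z : Fin K → ℝ => ∏ i, Real.exp (-(τ * |z i|))) (x - θ) := by
    funext x
    rw [hgprod]
    rfl
  have hg_int : Integrable g := by
    rw [hg_eq]
    exact hprod_int.comp_sub_right θ
  -- value of ∫ g
  have hIg : ∫ x, g x = (2 / τ) ^ K := by
    rw [hg_eq]
    rw [integral_sub_right_eq_self (fun z : Fin K → ℝ => ∏ i, Real.exp (-(τ * |z i|))) θ]
    rw [volume_pi, integral_fintype_prod_eq_pow (fun y : ℝ => Real.exp (-(τ * |y|)))]
    rw [oneD_val0 hτ, Fintype.card_fin]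
  -- the weighted integrand
  set f : Fin K → Fin K → ℝ → ℝ :=
    fun j i y => (if i = j then |y| else 1) * Real.exp (-(τ * |y|)) with hfdef
  have hf_int : ∀ j i, Integrable (f j i) := by
    intro j i
    by_cases h : i = j
    · simpa [hfdef, h] using oneD_integrable 1 hτ
    · simpa [hfdef, h] using h0
  have hf_val : ∀ j i, ∫ y, f j i y = if i = j then 2 / τ ^ 2 else 2 / τ := by
    intro j i
    by_cases h : i = j
    · simp only [hfdef, h, if_true]
      simpa using oneD_val1 hτ
    · simp only [hfdef, h, if_false, one_mul]
      exact oneD_val0 hτ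
  -- pointwise sum identity
  have hpoint : ∀ z : Fin K → ℝ,
      ∑ j, ∏ i, f j i (z i) = (∑ i, |z i|) * ∏ i, Real.exp (-(τ * |z i|)) := by
    intro z
    rw [Finset.sum_mul]
    refine Finset.sum_congr rfl fun j _ => ?_
    rw [hfdef]
    simp only
    rw [Finset.prod_mul_distrib, Finset.prod_ite_eq' Finset.univ j (fun i => |z i|)]
    simp
  have hSg_int : Integrable (fun x => (∑ i, |x i - θ i|) * g x) := by
    have h1 : Integrable (fun z : Fin K → ℝ => ∑ j, ∏ i, f j i (z i)) :=
      integrable_finset_sum _ fun j _ => Integrable.fintype_prod fun i => hf_int j i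
    have h2 := (h1.comp_sub_right θ)
    apply h2.congr
    filter_upwards with x
    simp only [Pi.sub_apply]
    rw [hpoint, ← hgprod]
  have hISg : ∫ x, (∑ i, |x i - θ i|) * g x = K * ((1 / τ) * (2 / τ) ^ K) := by
    have h1 : (fun x : Fin K → ℝ => (∑ i, |x i - θ i|) * g x)
        = fun x => (fun z : Fin K → ℝ => ∑ j, ∏ i, f j i (z i)) (x - θ) := by
      funext x
      simp only [Pi.sub_apply]
      rw [hpoint, ← hgprod]
    rw [h1, integral_sub_right_eq_self (fun z : Fin K → ℝ => ∑ j, ∏ i, f j i (z i)) θ]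
    rw [integral_finset_sum (μ := volume) _ fun j _ => (Integrable.fintype_prod fun i => hf_int j i : Integrable _ volume)]
    have h2 : ∀ j : Fin K, ∫ z : Fin K → ℝ, ∏ i, f j i (z i) = (1 / τ) * (2 / τ) ^ K := by
      intro j
      rw [volume_pi, integral_fintype_prod_eq_prod (fun i => f j i)]
      have h3 : ∀ i : Fin K, ∫ y, f j i y = (if i = j then 1 / τ else 1) * (2 / τ) := by
        intro i
        rw [hf_val]
        by_cases h : i = j <;> simp [h] <;> field_simp <;> ring
      simp_rw [h3]
      rw [Finset.prod_mul_distrib, Finset.prod_ite_eq' Finset.univ j (fun _ => (1 / τ : ℝ))]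
      simp [div_pow]
    simp_rw [h2]
    rw [Finset.sum_const, Finset.card_univ, Fintype.card_fin, nsmul_eq_mul]
  -- integrability of g • φ etc.
  have hgc : Continuous g := by
    rw [hgdef]
    exact Real.continuous_exp.comp <| (continuous_const.mul <| continuous_finset_sum _
      fun i _ => ((continuous_apply i).sub continuous_const).abs)
  have hgnonneg : ∀ x, 0 ≤ g x := fun x => Real.exp_nonneg _
  have hφint : Integrable (fun x => g x • φ x) := by
    refine Integrable.mono' hg_int ((hgc.smul hφc).aestronglyMeasurable) ?_
    filter_upwards with x
    rw [norm_smul, hunit, mul_one, Real.norm_eq_abs, abs_of_nonneg (hgnonneg x)]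
  have hφθint : Integrable (fun x => g x • φ θ) := hg_int.smul_const (φ θ)
  -- rewrite goal
  show ‖((τ / 2) ^ K • ∫ x, g x • φ x) - φ θ‖ ≤ K * ξ / τ
  have hφθ : φ θ = (τ / 2) ^ K • ∫ x, g x • φ θ := by
    rw [integral_smul_const, hIg, smul_smul, hone, one_smul]
  have h1 : ((τ / 2) ^ K • ∫ x, g x • φ x) - φ θ
      = (τ / 2) ^ K • ∫ x, g x • (φ x - φ θ) := by
    have h2 : (fun x => g x • (φ x - φ θ)) = fun x => g x • φ x - g x • φ θ := by
      funext x; rw [smul_sub]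
    rw [h2, integral_sub hφint hφθint, smul_sub, ← hφθ]
  rw [h1, norm_smul, Real.norm_eq_abs, abs_of_nonneg (by positivity)]
  have h3 : ‖∫ x, g x • (φ x - φ θ)‖ ≤ ∫ x, ξ * ((∑ i, |x i - θ i|) * g x) := by
    refine norm_integral_le_of_norm_le (hSg_int.const_mul ξ) ?_
    filter_upwards with x
    rw [norm_smul, Real.norm_eq_abs, abs_of_nonneg (hgnonneg x)]
    calc g x * ‖φ x - φ θ‖ ≤ g x * (ξ * ∑ i, |x i - θ i|) :=
          mul_le_mul_of_nonneg_left (hlip θ x) (hgnonneg x)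
      _ = ξ * ((∑ i, |x i - θ i|) * g x) := by ring
  calc (τ / 2) ^ K * ‖∫ x, g x • (φ x - φ θ)‖
      ≤ (τ / 2) ^ K * ∫ x, ξ * ((∑ i, |x i - θ i|) * g x) :=
        mul_le_mul_of_nonneg_left h3 (by positivity)
    _ = (τ / 2) ^ K * (ξ * (K * ((1 / τ) * (2 / τ) ^ K))) := by
        rw [integral_const_mul, hISg]
    _ = ξ * K * (1 / τ) * ((τ / 2) ^ K * (2 / τ) ^ K) := by ring
    _ = K * ξ / τ := by rw [hone]; ring

/-- (Core of Theorem 4: approximation of arbitrary linear combinations) Let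
`φ : ℝ^K → ℂ^d` take unit values and satisfy `‖φ(θ′) − φ(θ)‖₂ ≤ ξ·‖θ′ − θ‖₁`, let
`ψ_τ(θ) = (τ/2)^K ∫ e^{−τ‖θ′−θ‖₁} φ(θ′) dθ′`, and let `φ* = Σ_i β_i φ(θ_i)`. Then for
every `τ > 0`, `‖Σ_i β_i ψ_τ(θ_i) − φ*‖₂ ≤ (Kξ/τ)·Σ_i |β_i|`. In particular, if the
vectors `φ(θ₁), …, φ(θ_m)` span `ℂ^d`, then every vector of `ℂ^d` is the limit as
`τ → ∞` of vectors of the form `Σ_i β_i ψ_τ(θ_i)`. -/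
theorem stmt7 (K d : ℕ) (hK : 0 < K) (hd : 0 < d) (ξ : ℝ) (hξ : 0 < ξ)
    (φ : (Fin K → ℝ) → EuclideanSpace ℂ (Fin d))
    (hunit : ∀ θ, ‖φ θ‖ = 1)
    (hlip : ∀ θ θ', ‖φ θ' - φ θ‖ ≤ ξ * ∑ i, |θ' i - θ i|)
    (ψ : ℝ → (Fin K → ℝ) → EuclideanSpace ℂ (Fin d))
    (hψ : ∀ τ θ, ψ τ θ =
      (τ / 2) ^ K • ∫ θ' : Fin K → ℝ,
        Real.exp (-τ * ∑ i, |θ' i - θ i|) • φ θ')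
    (m : ℕ) (θs : Fin m → Fin K → ℝ) (β : Fin m → ℂ) :
    (∀ τ : ℝ, 0 < τ →
      ‖(∑ i, β i • ψ τ (θs i)) - ∑ i, β i • φ (θs i)‖ ≤
        K * ξ / τ * ∑ i, ‖β i‖) ∧
    (Submodule.span ℂ (Set.range fun i => φ (θs i)) = ⊤ →
      ∀ v : EuclideanSpace ℂ (Fin d), ∃ γ : Fin m → ℂ,
        Filter.Tendsto (fun τ : ℝ => ∑ i, γ i • ψ τ (θs i))
          Filter.atTop (nhds v)) := by
  -- continuity of φ
  have hφc : Continuous φ := by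
    have hd' : ∀ a b : Fin K → ℝ, dist (φ a) (φ b) ≤ (K * ξ) * dist a b := by
      intro a b
      rw [dist_eq_norm]
      refine (hlip b a).trans ?_
      have h1 : ∀ i, |a i - b i| ≤ dist a b := fun i => by
        rw [← Real.dist_eq]; exact dist_le_pi_dist a b i
      calc ξ * ∑ i, |a i - b i| ≤ ξ * ∑ _i : Fin K, dist a b :=
            mul_le_mul_of_nonneg_left (Finset.sum_le_sum fun i _ => h1 i) hξ.le
        _ = (K * ξ) * dist a b := by
            rw [Finset.sum_const, Finset.card_univ, Fintype.card_fin, nsmul_eq_mul]; ring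
    exact (LipschitzWith.of_dist_le_mul (K := ⟨K * ξ, by positivity⟩) hd').continuous
  -- the main bound for individual ψ
  have hmb : ∀ τ : ℝ, 0 < τ → ∀ i : Fin m, ‖ψ τ (θs i) - φ (θs i)‖ ≤ K * ξ / τ := by
    intro τ hτ i
    rw [hψ]
    exact main_bound hξ.le hτ φ hφc hunit hlip (θs i)
  have hpart1 : ∀ τ : ℝ, 0 < τ →
      ‖(∑ i, β i • ψ τ (θs i)) - ∑ i, β i • φ (θs i)‖ ≤
        K * ξ / τ * ∑ i, ‖β i‖ := by
    intro τ hτ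
    rw [← Finset.sum_sub_distrib]
    have h1 : ∀ i : Fin m, β i • ψ τ (θs i) - β i • φ (θs i)
        = β i • (ψ τ (θs i) - φ (θs i)) := fun i => (smul_sub _ _ _).symm
    simp_rw [h1]
    refine (norm_sum_le _ _).trans ?_
    rw [Finset.mul_sum]
    refine Finset.sum_le_sum fun i _ => ?_
    rw [norm_smul]
    calc ‖β i‖ * ‖ψ τ (θs i) - φ (θs i)‖ ≤ ‖β i‖ * (K * ξ / τ) :=
          mul_le_mul_of_nonneg_left (hmb τ hτ i) (norm_nonneg _)
      _ = K * ξ / τ * ‖β i‖ := by ring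
  refine ⟨hpart1, ?_⟩
  intro hspan v
  have hv : v ∈ Submodule.span ℂ (Set.range fun i => φ (θs i)) := by
    rw [hspan]; trivial
  rw [Finsupp.mem_span_range_iff_exists_finsupp] at hv
  obtain ⟨c, hc⟩ := hv
  refine ⟨c, ?_⟩
  have hc' : ∑ i, c i • φ (θs i) = v := by
    rw [← hc, Finsupp.sum_fintype]
    simp
  rw [tendsto_iff_norm_sub_tendsto_zero]
  have hub : ∀ᶠ τ : ℝ in Filter.atTop,
      ‖(∑ i, c i • ψ τ (θs i)) - v‖ ≤ (K * ξ * ∑ i, ‖c i‖) * τ⁻¹ := by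
    filter_upwards [Filter.eventually_gt_atTop (0 : ℝ)] with τ hτ
    have h2 : ‖(∑ i, c i • ψ τ (θs i)) - ∑ i, c i • φ (θs i)‖ ≤
        K * ξ / τ * ∑ i, ‖c i‖ := by
      rw [← Finset.sum_sub_distrib]
      have h1 : ∀ i : Fin m, c i • ψ τ (θs i) - c i • φ (θs i)
          = c i • (ψ τ (θs i) - φ (θs i)) := fun i => (smul_sub _ _ _).symm
      simp_rw [h1]
      refine (norm_sum_le _ _).trans ?_
      rw [Finset.mul_sum]
      refine Finset.sum_le_sum fun i _ => ?_
      rw [norm_smul]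
      calc ‖c i‖ * ‖ψ τ (θs i) - φ (θs i)‖ ≤ ‖c i‖ * (K * ξ / τ) :=
            mul_le_mul_of_nonneg_left (hmb τ hτ i) (norm_nonneg _)
        _ = K * ξ / τ * ‖c i‖ := by ring
    rw [hc'] at h2
    refine h2.trans_eq ?_
    ring
  refine squeeze_zero' (Filter.Eventually.of_forall fun τ => norm_nonneg _) hub ?_
  have := tendsto_inv_atTop_zero (𝕜 := ℝ)
  have h4 := this.const_mul (K * ξ * ∑ i, ‖c i‖)
  simpa using h4
end

section
/- (Lemma 1: energy error of the Gaussian-filtered state) Define E(τ) = (Σ_{l=1}^{d} e^{−(E_l−E_g)²τ²} p_l E_l)/(Σ_{l=1}^{d} e^{−(E_l−E_g)²τ²} p_l). Then E(τ) − E_g ≤ ((1 − p_g)/p_g)·e^{−Δ̃²τ²}·Δ̃. -/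
/-!
Write `u = E_l - E_g ≥ 0`. Subtracting `E_g` turns the filtered energy into
`∑ p_l φ(u_l) / ∑ e^{-u_l²τ²} p_l` with `φ(u) = u e^{-u²τ²}`; the denominator is at least `p_g`,
and the ground term of the numerator vanishes. The profile `φ` increases up to its maximiser
`(√2 τ)⁻¹` and decreases afterwards, so on `u ≥ Δ` it is bounded by `φ(Δ̃)`. Both monotonicity
facts follow from `1 + y ≤ e^y` alone.
-/

open Real Finset

section GaussianProfile

variable {τ : ℝ}

lemma mul_exp_neg_sq_mul_sq_le_of_le_mul_one_add {a x : ℝ} (ha : 0 ≤ a)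
    (h : x ≤ a * (1 + (x ^ 2 - a ^ 2) * τ ^ 2)) :
    x * exp (-x ^ 2 * τ ^ 2) ≤ a * exp (-a ^ 2 * τ ^ 2) :=
  calc x * exp (-x ^ 2 * τ ^ 2)
      ≤ a * exp ((x ^ 2 - a ^ 2) * τ ^ 2) * exp (-x ^ 2 * τ ^ 2) := by
        gcongr
        refine h.trans (mul_le_mul_of_nonneg_left ?_ ha)
        linarith [add_one_le_exp ((x ^ 2 - a ^ 2) * τ ^ 2)]
    _ = a * exp (-a ^ 2 * τ ^ 2) := by
        rw [mul_assoc, ← exp_add]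
        ring_nf

lemma mul_exp_neg_sq_mul_sq_le_of_le {a x : ℝ} (ha : 0 ≤ a) (haτ : 1 ≤ 2 * a ^ 2 * τ ^ 2)
    (hax : a ≤ x) :
    x * exp (-x ^ 2 * τ ^ 2) ≤ a * exp (-a ^ 2 * τ ^ 2) := by
  refine mul_exp_neg_sq_mul_sq_le_of_le_mul_one_add ha ?_
  have hfactor : a * (1 + (x ^ 2 - a ^ 2) * τ ^ 2) - x = (x - a) * (a * (x + a) * τ ^ 2 - 1) := by
    ring
  nlinarith [mul_nonneg (sub_nonneg.2 hax) (mul_nonneg ha (sq_nonneg τ))]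

lemma sq_inv_sqrt_two_mul_mul_sq (hτ : τ ≠ 0) : ((√2 * τ)⁻¹) ^ 2 * τ ^ 2 = 1 / 2 := by
  rw [inv_pow, mul_pow, sq_sqrt zero_le_two]
  field_simp

lemma mul_exp_neg_sq_mul_sq_le_max (hτ : 0 < τ) (x : ℝ) :
    x * exp (-x ^ 2 * τ ^ 2) ≤ (√2 * τ)⁻¹ * exp (-((√2 * τ)⁻¹) ^ 2 * τ ^ 2) := by
  set c := (√2 * τ)⁻¹
  have hc : c ^ 2 * τ ^ 2 = 1 / 2 := sq_inv_sqrt_two_mul_mul_sq hτ.ne'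
  have hc0 : 0 ≤ c := by positivity
  refine mul_exp_neg_sq_mul_sq_le_of_le_mul_one_add hc0 ?_
  have hcτ : c * √2 * τ = 1 := by rw [mul_assoc]; exact inv_mul_cancel₀ (by positivity)
  have hsquare : c * (1 + (x ^ 2 - c ^ 2) * τ ^ 2) - x = c * (x * τ * √2 - 1) ^ 2 / 2 := by
    linear_combination (-(c * x ^ 2 * τ ^ 2) / 2) * sq_sqrt (zero_le_two : (0 : ℝ) ≤ 2)
      - c * hc + x * hcτ
  nlinarith [mul_nonneg hc0 (sq_nonneg (x * τ * √2 - 1))]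

lemma mul_exp_neg_sq_mul_sq_le_of_gap (hτ : 0 < τ) {Δ x : ℝ} (hx : Δ ≤ x) :
    x * exp (-x ^ 2 * τ ^ 2) ≤ max Δ (√2 * τ)⁻¹ * exp (-(max Δ (√2 * τ)⁻¹) ^ 2 * τ ^ 2) := by
  rcases le_total Δ (√2 * τ)⁻¹ with h | h
  · rw [max_eq_right h]
    exact mul_exp_neg_sq_mul_sq_le_max hτ x
  · rw [max_eq_left h]
    have hc := sq_inv_sqrt_two_mul_mul_sq hτ.ne'
    have hc0 : 0 < (√2 * τ)⁻¹ := by positivity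
    refine mul_exp_neg_sq_mul_sq_le_of_le (hc0.le.trans h) ?_ hx
    nlinarith [mul_le_mul h h hc0.le (hc0.le.trans h), sq_nonneg τ]

end GaussianProfile

lemma sum_mul_div_sum_sub_le {ι : Type*} [Fintype ι] (w E : ι → ℝ) (g : ι) (hw : ∀ l, 0 ≤ w l)
    (hg : 0 < w g) (hE : ∀ l, E g ≤ E l) :
    (∑ l, w l * E l) / (∑ l, w l) - E g ≤ (∑ l, w l * (E l - E g)) / w g := by
  have hwg : w g ≤ ∑ l, w l := single_le_sum (fun l _ => hw l) (mem_univ g)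
  have hcentre : (∑ l, w l * E l) / (∑ l, w l) - E g = (∑ l, w l * (E l - E g)) / ∑ l, w l := by
    simp only [mul_sub, sum_sub_distrib, ← sum_mul]
    field_simp [(hg.trans_le hwg).ne']
  rw [hcentre]
  exact div_le_div_of_nonneg_left
    (sum_nonneg fun l _ => mul_nonneg (hw l) (sub_nonneg.2 (hE l))) hg hwg

noncomputable def gaussianFilteredEnergy {ι : Type*} [Fintype ι] (E p : ι → ℝ) (Eg τ : ℝ) : ℝ :=
  (∑ l, exp (-(E l - Eg) ^ 2 * τ ^ 2) * p l * E l) / (∑ l, exp (-(E l - Eg) ^ 2 * τ ^ 2) * p l)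

theorem gaussianFilteredEnergy_sub_le {ι : Type*} [Fintype ι] [DecidableEq ι] (E p : ι → ℝ)
    (g : ι) (hp : ∀ l, 0 ≤ p l) (hpg : 0 < p g) {Δ : ℝ} (hΔ : 0 ≤ Δ)
    (hE : ∀ l ≠ g, E g + Δ ≤ E l) {τ : ℝ} (hτ : 0 < τ) :
    gaussianFilteredEnergy E p (E g) τ - E g ≤
      (∑ l, p l - p g) / p g * exp (-(max Δ (√2 * τ)⁻¹) ^ 2 * τ ^ 2) * max Δ (√2 * τ)⁻¹ := by
  set w : ι → ℝ := fun l => exp (-(E l - E g) ^ 2 * τ ^ 2) * p l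
  set C := max Δ (√2 * τ)⁻¹ * exp (-(max Δ (√2 * τ)⁻¹) ^ 2 * τ ^ 2)
  have hEg : ∀ l, E g ≤ E l := fun l => by
    rcases eq_or_ne l g with rfl | hl
    · rfl
    · linarith [hE l hl]
  have hterm : ∀ l, w l * (E l - E g) = p l * ((E l - E g) * exp (-(E l - E g) ^ 2 * τ ^ 2)) :=
    fun l => by ring
  have hnum : ∑ l, w l * (E l - E g) ≤ (∑ l, p l - p g) * C :=
    calc ∑ l, w l * (E l - E g) = ∑ l ∈ univ.erase g, w l * (E l - E g) :=
          (sum_erase _ (by simp)).symm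
      _ ≤ ∑ l ∈ univ.erase g, p l * C := sum_le_sum fun l hl => by
          rw [hterm]
          exact mul_le_mul_of_nonneg_left (mul_exp_neg_sq_mul_sq_le_of_gap hτ
            (le_sub_iff_add_le'.2 (hE l (ne_of_mem_erase hl)))) (hp l)
      _ = (∑ l, p l - p g) * C := by rw [← sum_mul, sum_erase_eq_sub (mem_univ g)]
  calc gaussianFilteredEnergy E p (E g) τ - E g ≤ (∑ l, w l * (E l - E g)) / w g :=
        sum_mul_div_sum_sub_le w E g (fun l => mul_nonneg (exp_pos _).le (hp l)) (by simpa [w]) hEg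
    _ ≤ (∑ l, p l - p g) * C / p g := by
        rw [show w g = p g by simp [w]]
        gcongr
    _ = _ := by ring

/-- (Lemma 1: energy error of the Gaussian-filtered state) Let `d ≥ 2`,
`E 0 ≤ E 1 ≤ ⋯ ≤ E (d-1)` with ground energy `E_g = E 0` and gap `Δ = E 1 − E 0 > 0`,
and probabilities `p l ≥ 0`, `∑ p l = 1`, `p_g = p 0 > 0`. For `τ > 0` and
`Δ̃ = max{Δ, (√2·τ)⁻¹}`, the filtered energy
`E(τ) = (∑ e^{−(E_l−E_g)²τ²} p_l E_l)/(∑ e^{−(E_l−E_g)²τ²} p_l)` satisfies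
`E(τ) − E_g ≤ ((1 − p_g)/p_g)·e^{−Δ̃²τ²}·Δ̃`. -/
theorem stmt8 (d : ℕ) (hd : 2 ≤ d) (E : Fin d → ℝ) (hmono : Monotone E)
    (p : Fin d → ℝ) (hp : ∀ l, 0 ≤ p l) (hsum : ∑ l, p l = 1)
    (hpg : 0 < p ⟨0, by omega⟩)
    (τ : ℝ) (hτ : 0 < τ) :
    (∑ l, Real.exp (-(E l - E ⟨0, by omega⟩) ^ 2 * τ ^ 2) * p l * E l) /
        (∑ l, Real.exp (-(E l - E ⟨0, by omega⟩) ^ 2 * τ ^ 2) * p l) -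
      E ⟨0, by omega⟩ ≤
    (1 - p ⟨0, by omega⟩) / p ⟨0, by omega⟩ *
      Real.exp (-(max (E ⟨1, by omega⟩ - E ⟨0, by omega⟩) (Real.sqrt 2 * τ)⁻¹) ^ 2 * τ ^ 2) *
      max (E ⟨1, by omega⟩ - E ⟨0, by omega⟩) (Real.sqrt 2 * τ)⁻¹ := by
  have hE : ∀ l ≠ ⟨0, by omega⟩, E ⟨0, by omega⟩ + (E ⟨1, by omega⟩ - E ⟨0, by omega⟩) ≤ E l :=
    fun l hl => by
      rw [add_sub_cancel]
      exact hmono (Fin.le_def.2 (Nat.one_le_iff_ne_zero.2 fun h => hl (Fin.ext h)))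
  have hgap : 0 ≤ E ⟨1, by omega⟩ - E ⟨0, by omega⟩ :=
    sub_nonneg.2 (hmono (Fin.le_def.2 zero_le_one))
  have h := gaussianFilteredEnergy_sub_le E p _ hp hpg hgap hE hτ
  rw [hsum] at h
  exact h
end

section
/- (Lemma 2, Eq. (42): upper bound on c(τ)) If N_T > 4·h_tot²·τ², then c(τ) ≤ √(2π/(1 − 4·h_tot²·τ²/N_T)). -/
open Real MeasureTheory

lemma my_exp_sub_le (t : ℝ) (ht : 0 ≤ t) : Real.exp t - t ≤ Real.exp (t ^ 2) := by
  rcases le_or_gt t 1 with h1 | h1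
  · have hb := Real.exp_bound (x := t) (by rwa [abs_of_nonneg ht]) (by norm_num : 0 < 2)
    have hsum : ∑ i ∈ Finset.range 2, t ^ i / (Nat.factorial i) = 1 + t := by
      simp [Finset.sum_range_succ]
    rw [hsum, abs_of_nonneg ht] at hb
    have h2 : Real.exp t ≤ 1 + t + t ^ 2 := by
      norm_num [Nat.factorial] at hb
      have := abs_le.mp hb
      nlinarith [sq_nonneg t]
    have h3 : 1 + t ^ 2 ≤ Real.exp (t ^ 2) := by
      have := Real.add_one_le_exp (t ^ 2); linarith
    linarith
  · have h2 : t ≤ t ^ 2 := by nlinarith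
    have := Real.exp_le_exp.mpr h2
    linarith

lemma my_key (t : ℝ) (ht : 0 ≤ t) : 2 * Real.exp t - 1 - 2 * t ≤ Real.exp (2 * t ^ 2) := by
  have h1 := my_exp_sub_le t ht
  have h2 := Real.add_one_le_exp t
  have h3 : Real.exp (2 * t ^ 2) = Real.exp (t ^ 2) * Real.exp (t ^ 2) := by
    rw [← Real.exp_add]; ring_nf
  have h4 : 0 ≤ Real.exp t - t := by linarith
  nlinarith [sq_nonneg (Real.exp t - t - 1), Real.exp_pos (t ^ 2)]

/-- (Lemma 2, Eq. (42): upper bound on `c(τ)`) For `h_tot, τ > 0` and a positive integer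
`N_T` with `N_T > 4·h_tot²·τ²`, the integral
`c(τ) = ∫ e^{−u²/2}·(2·e^{(h_tot·τ/N_T)·|u|} − 1 − 2·(h_tot·τ/N_T)·|u|)^{N_T} du`
satisfies `c(τ) ≤ √(2π/(1 − 4·h_tot²·τ²/N_T))`. -/
theorem stmt12 (h_tot τ : ℝ) (hh : 0 < h_tot) (hτ : 0 < τ) (NT : ℕ) (hNT : 0 < NT)
    (hcond : 4 * h_tot ^ 2 * τ ^ 2 < (NT : ℝ)) :
    (∫ u : ℝ, Real.exp (-u ^ 2 / 2) *
        (2 * Real.exp (h_tot * τ / NT * |u|) - 1 - 2 * (h_tot * τ / NT * |u|)) ^ NT) ≤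
      Real.sqrt (2 * Real.pi / (1 - 4 * h_tot ^ 2 * τ ^ 2 / NT)) := by
  have hN : (0 : ℝ) < NT := Nat.cast_pos.mpr hNT
  set a : ℝ := h_tot * τ / NT with ha
  have hapos : 0 < a := div_pos (mul_pos hh hτ) hN
  set b : ℝ := 1 / 2 - 2 * h_tot ^ 2 * τ ^ 2 / NT with hbdef
  have hbpos : 0 < b := by
    rw [hbdef, sub_pos, div_lt_iff₀ hN]; linarith
  have hfg : ∀ u : ℝ, Real.exp (-u ^ 2 / 2) *
      (2 * Real.exp (a * |u|) - 1 - 2 * (a * |u|)) ^ NT ≤ Real.exp (-b * u ^ 2) := by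
    intro u
    set t : ℝ := a * |u| with htdef
    have ht0 : 0 ≤ t := mul_nonneg hapos.le (abs_nonneg u)
    have hbase0 : 0 ≤ 2 * Real.exp t - 1 - 2 * t := by
      have := Real.add_one_le_exp t; linarith
    have hpow : (2 * Real.exp t - 1 - 2 * t) ^ NT ≤ (Real.exp (2 * t ^ 2)) ^ NT :=
      pow_le_pow_left₀ hbase0 (my_key t ht0) NT
    have hexp : (Real.exp (2 * t ^ 2)) ^ NT = Real.exp (NT * (2 * t ^ 2)) := by
      rw [← Real.exp_nat_mul]
    calc Real.exp (-u ^ 2 / 2) * (2 * Real.exp t - 1 - 2 * t) ^ NT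
        ≤ Real.exp (-u ^ 2 / 2) * Real.exp (NT * (2 * t ^ 2)) := by
          rw [← hexp]; exact mul_le_mul_of_nonneg_left hpow (Real.exp_pos _).le
      _ = Real.exp (-u ^ 2 / 2 + NT * (2 * t ^ 2)) := (Real.exp_add _ _).symm
      _ = Real.exp (-b * u ^ 2) := by
          congr 1
          have ht2 : t ^ 2 = a ^ 2 * u ^ 2 := by
            rw [htdef, mul_pow, sq_abs]
          rw [ht2, hbdef, ha]
          field_simp
          ring
  have hg_int : Integrable (fun u : ℝ => Real.exp (-b * u ^ 2)) := integrable_exp_neg_mul_sq hbpos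
  have hf0 : ∀ u : ℝ, 0 ≤ Real.exp (-u ^ 2 / 2) *
      (2 * Real.exp (a * |u|) - 1 - 2 * (a * |u|)) ^ NT := by
    intro u
    have ht0 : 0 ≤ a * |u| := mul_nonneg hapos.le (abs_nonneg u)
    have hbase0 : 0 ≤ 2 * Real.exp (a * |u|) - 1 - 2 * (a * |u|) := by
      have := Real.add_one_le_exp (a * |u|); linarith
    exact mul_nonneg (Real.exp_pos _).le (pow_nonneg hbase0 NT)
  have hmono : (∫ u : ℝ, Real.exp (-u ^ 2 / 2) *
      (2 * Real.exp (a * |u|) - 1 - 2 * (a * |u|)) ^ NT) ≤ ∫ u : ℝ, Real.exp (-b * u ^ 2) :=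
    integral_mono_of_nonneg (Filter.Eventually.of_forall hf0) hg_int
      (Filter.Eventually.of_forall hfg)
  have hgauss : (∫ u : ℝ, Real.exp (-b * u ^ 2)) = Real.sqrt (π / b) := integral_gaussian b
  have key2 : 1 - 4 * h_tot ^ 2 * τ ^ 2 / (NT : ℝ) = 2 * b := by rw [hbdef]; ring
  have hπb : π / b = 2 * π / (1 - 4 * h_tot ^ 2 * τ ^ 2 / NT) := by
    rw [key2, mul_div_mul_left π b (two_ne_zero)]
  calc (∫ u : ℝ, Real.exp (-u ^ 2 / 2) *
        (2 * Real.exp (a * |u|) - 1 - 2 * (a * |u|)) ^ NT)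
      ≤ ∫ u : ℝ, Real.exp (-b * u ^ 2) := hmono
    _ = Real.sqrt (π / b) := hgauss
    _ = Real.sqrt (2 * π / (1 - 4 * h_tot ^ 2 * τ ^ 2 / NT)) := by rw [hπb]
end

section
/- (Eq. (48): choice of τ achieving permissible error ε) For every ε > 0, setting τ = (1−p_g)/(√(2e)·p_g·ε) if ε > ((1−p_g)/(√e·p_g))·Δ, and τ = (1/Δ)·√(ln((1−p_g)·Δ/(p_g·ε))) if ε ≤ ((1−p_g)/(√e·p_g))·Δ, one has ((1−p_g)/p_g)·e^{−Δ̃(τ)²τ²}·Δ̃(τ) ≤ ε, where Δ̃(τ) = max{Δ, (√2·τ)^{−1}}. -/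
open Real

/-!
Write `a = (1 - p_g)/p_g` and `Δ̃ = max Δ (√2 τ)⁻¹`. In both branches the bound holds with
equality. For large `ε` the choice of `τ` makes `(√2 τ)⁻¹ = √e ε / a` exceed `Δ`, so
`Δ̃² τ² = 1/2` and the error is `a e^{-1/2} √e ε / a = ε`. For small `ε` put
`L = ln (a Δ / ε)`; the hypothesis on `ε` gives `L ≥ 1/2`, i.e. `√2 τ Δ = √(2L) ≥ 1`, so
`Δ̃ = Δ`, `Δ² τ² = L`, and the error is `a e^{-L} Δ = ε`.
-/

namespace GaussianErrorBound

variable {a Δ ε τ : ℝ}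

lemma inv_sqrt_two_mul_sq_mul_sq (hτ : τ ≠ 0) : ((√2 * τ)⁻¹) ^ 2 * τ ^ 2 = 1 / 2 := by
  rw [inv_pow, mul_pow, sq_sqrt zero_le_two]
  field_simp

lemma error_eq_of_threshold_lt (ha : 0 < a) (hε : 0 < ε) (h : a / √(exp 1) * Δ < ε)
    (hτ : τ = a / (√(2 * exp 1) * ε)) :
    a * exp (-(max Δ (√2 * τ)⁻¹) ^ 2 * τ ^ 2) * max Δ (√2 * τ)⁻¹ = ε := by
  have hse : 0 < √(exp 1) := sqrt_pos.2 (exp_pos 1)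
  have hinv : (√2 * τ)⁻¹ = √(exp 1) * ε / a := by
    rw [hτ, sqrt_mul zero_le_two]
    field_simp
  have hmax : max Δ (√2 * τ)⁻¹ = (√2 * τ)⁻¹ := by
    refine max_eq_right (le_of_lt ?_)
    rw [hinv, lt_div_iff₀ ha]
    rw [div_mul_eq_mul_div, div_lt_iff₀ hse] at h
    linarith
  have hτ0 : τ ≠ 0 := by rw [hτ]; positivity
  have hexp : exp (-(1 / 2)) * √(exp 1) = 1 := by
    rw [← exp_half, ← exp_add]
    norm_num
  rw [hmax, neg_mul, inv_sqrt_two_mul_sq_mul_sq hτ0, hinv]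
  calc a * exp (-(1 / 2)) * (√(exp 1) * ε / a) = exp (-(1 / 2)) * √(exp 1) * ε := by
        field_simp
    _ = ε := by rw [hexp, one_mul]

lemma error_eq_of_le_threshold (ha : 0 < a) (hΔ : 0 < Δ) (hε : 0 < ε) (h : ε ≤ a / √(exp 1) * Δ)
    (hτ : τ = 1 / Δ * √(log (a * Δ / ε))) :
    a * exp (-(max Δ (√2 * τ)⁻¹) ^ 2 * τ ^ 2) * max Δ (√2 * τ)⁻¹ = ε := by
  set L := log (a * Δ / ε) with hL
  have harg : 0 < a * Δ / ε := by positivity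
  have hL_half : 1 / 2 ≤ L := by
    rw [hL, le_log_iff_exp_le harg, exp_half, le_div_iff₀ hε]
    rw [div_mul_eq_mul_div, le_div_iff₀ (sqrt_pos.2 (exp_pos 1))] at h
    linarith
  have hL0 : 0 ≤ L := by linarith
  have hτΔ : τ * Δ = √L := by
    rw [hτ, one_div_mul_eq_div, div_mul_cancel₀ _ hΔ.ne']
  have hmax : max Δ (√2 * τ)⁻¹ = Δ := by
    have hτ0 : 0 < τ := by
      have := sqrt_pos.2 (show 0 < L by linarith)
      rw [hτ]
      positivity
    refine max_eq_left ?_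
    rw [inv_le_iff_one_le_mul₀' (by positivity)]
    calc (1 : ℝ) ≤ √(2 * L) := one_le_sqrt.2 (by linarith)
      _ = √2 * τ * Δ := by rw [mul_assoc, hτΔ, sqrt_mul zero_le_two]
  have hexp : exp (-Δ ^ 2 * τ ^ 2) = ε / (a * Δ) := by
    rw [show -Δ ^ 2 * τ ^ 2 = -(τ * Δ) ^ 2 by ring, hτΔ, sq_sqrt hL0, exp_neg, hL, exp_log harg,
      inv_div]
  rw [hmax, hexp]
  field_simp

end GaussianErrorBound

open GaussianErrorBound in
/-- (Eq. (48): choice of `τ` achieving permissible error `ε`) For `0 < p_g < 1`, `Δ > 0`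
and any `ε > 0`, setting `τ = (1−p_g)/(√(2e)·p_g·ε)` if `ε > ((1−p_g)/(√e·p_g))·Δ`, and
`τ = (1/Δ)·√(ln((1−p_g)·Δ/(p_g·ε)))` otherwise, one has
`((1−p_g)/p_g)·e^{−Δ̃(τ)²τ²}·Δ̃(τ) ≤ ε`, where `Δ̃(τ) = max{Δ, (√2·τ)⁻¹}`. -/
theorem stmt14 (p_g Δ ε : ℝ) (hp0 : 0 < p_g) (hp1 : p_g < 1) (hΔ : 0 < Δ) (hε : 0 < ε)
    (τ : ℝ)
    (hτ : τ = if (1 - p_g) / (Real.sqrt (Real.exp 1) * p_g) * Δ < ε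
        then (1 - p_g) / (Real.sqrt (2 * Real.exp 1) * p_g * ε)
        else (1 / Δ) * Real.sqrt (Real.log ((1 - p_g) * Δ / (p_g * ε)))) :
    (1 - p_g) / p_g *
        Real.exp (-(max Δ (Real.sqrt 2 * τ)⁻¹) ^ 2 * τ ^ 2) *
        max Δ (Real.sqrt 2 * τ)⁻¹ ≤ ε := by
  have ha : 0 < (1 - p_g) / p_g := div_pos (by linarith) hp0
  have hthreshold : (1 - p_g) / (√(exp 1) * p_g) = (1 - p_g) / p_g / √(exp 1) := by ring
  refine le_of_eq ?_
  split_ifs at hτ with h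
  · exact error_eq_of_threshold_lt ha hε (hthreshold ▸ h) (by rw [hτ]; ring)
  · exact error_eq_of_le_threshold ha hΔ hε (hthreshold ▸ not_lt.1 h) (by rw [hτ]; ring_nf)
end

section
/- (Eq. (47): cost-induced lower bound on τ) Suppose 0 < x < p_g ≤ 1. Then every τ > 0 satisfying c(τ) ≥ √(2π·p_g/x) also satisfies τ ≥ (1/(2·h_tot))·√(N_T·(1 − x/p_g)). -/
/-!
Since `2eᵗ - 1 - 2t ≤ e^{2t²}` for `t ≥ 0`, the integrand of `c(τ)` is dominated by the Gaussian
`exp (-(1/2 - 2 N_T a²) u²)` with `a = h_tot τ / N_T`. If `4 N_T a² < 1 - x/p_g`, that Gaussian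
has integral `√(π / (1/2 - 2 N_T a²)) < √(2π p_g / x)`, contradicting the hypothesis on `c(τ)`.
Hence `1 - x/p_g ≤ 4 h_tot² τ² / N_T`, which is the claimed bound.
-/

open Real MeasureTheory

lemma Real.exp_le_two_mul_exp_two_mul_sq (s : ℝ) : exp s ≤ 2 * exp (2 * s ^ 2) := by
  have hquad : s - 2 * s ^ 2 ≤ 1 / 8 := by nlinarith [sq_nonneg (s - 1 / 4)]
  have hexp : exp (1 / 8 : ℝ) < 2 := by
    have := exp_bound_div_one_sub_of_interval' (x := 1 / 8) (by norm_num) (by norm_num)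
    linarith [show (1 : ℝ) / (1 - 1 / 8) < 2 by norm_num]
  calc exp s = exp (s - 2 * s ^ 2) * exp (2 * s ^ 2) := by rw [← exp_add]; ring_nf
    _ ≤ 2 * exp (2 * s ^ 2) := by
      gcongr
      exact ((exp_le_exp.mpr hquad).trans hexp.le)

lemma Real.one_le_two_mul_exp_sub_one_sub_two_mul (t : ℝ) : 1 ≤ 2 * exp t - 1 - 2 * t := by
  linarith [add_one_le_exp t]

lemma Real.two_mul_exp_sub_one_sub_two_mul_le_exp {t : ℝ} (ht : 0 ≤ t) :
    2 * exp t - 1 - 2 * t ≤ exp (2 * t ^ 2) := by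
  set g : ℝ → ℝ := fun s => exp (2 * s ^ 2) + 1 + 2 * s - 2 * exp s
  have hg : ∀ s, HasDerivAt g (4 * s * exp (2 * s ^ 2) + 2 - 2 * exp s) s := by
    intro s
    have hsq : HasDerivAt (fun s : ℝ => 2 * s ^ 2) (4 * s) s :=
      ((hasDerivAt_pow 2 s).const_mul (2 : ℝ)).congr_deriv (by norm_num; ring)
    exact (((hsq.exp.add_const 1).add ((hasDerivAt_id s).const_mul 2)).sub
      ((hasDerivAt_exp s).const_mul 2)).congr_deriv (by ring)
  -- `(1 - s) eˢ ≤ 1` together with `eˢ ≤ 2 e^{2s²}` makes the derivative nonnegative.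
  have hg_nonneg : ∀ s, 0 ≤ s → 0 ≤ 4 * s * exp (2 * s ^ 2) + 2 - 2 * exp s := by
    intro s hs
    have h1 : (1 - s) * exp s ≤ 1 := by
      have := mul_le_mul_of_nonneg_right (add_one_le_exp (-s)) (exp_pos s).le
      rwa [← exp_add, neg_add_cancel, exp_zero, neg_add_eq_sub] at this
    nlinarith [mul_le_mul_of_nonneg_left (exp_le_two_mul_exp_two_mul_sq s) hs]
  have hmono : MonotoneOn g (Set.Ici 0) := by
    refine monotoneOn_of_deriv_nonneg (convex_Ici 0)
      (fun s _ => (hg s).continuousAt.continuousWithinAt)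
      (fun s _ => (hg s).differentiableAt.differentiableWithinAt) fun s hs => ?_
    rw [(hg s).deriv]
    exact hg_nonneg s (interior_subset hs)
  have hg_le := hmono Set.self_mem_Ici ht ht
  simp only [g] at hg_le
  norm_num at hg_le
  linarith

section GaussianDomination

variable {a : ℝ} (N : ℕ)

lemma integrand_le_gaussian (ha : 0 ≤ a) (u : ℝ) :
    exp (-u ^ 2 / 2) * (2 * exp (a * |u|) - 1 - 2 * (a * |u|)) ^ N ≤
      exp (-(1 / 2 - 2 * N * a ^ 2) * u ^ 2) := by
  have ht : 0 ≤ a * |u| := by positivity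
  calc exp (-u ^ 2 / 2) * (2 * exp (a * |u|) - 1 - 2 * (a * |u|)) ^ N
      ≤ exp (-u ^ 2 / 2) * exp (2 * (a * |u|) ^ 2) ^ N := by
        gcongr
        · linarith [one_le_two_mul_exp_sub_one_sub_two_mul (a * |u|)]
        · exact two_mul_exp_sub_one_sub_two_mul_le_exp ht
    _ = exp (-(1 / 2 - 2 * N * a ^ 2) * u ^ 2) := by
        rw [← exp_nat_mul, ← exp_add, mul_pow, sq_abs]
        ring_nf

lemma integral_le_sqrt_pi_div (ha : 0 ≤ a) (hb : 0 < 1 / 2 - 2 * N * a ^ 2) :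
    ∫ u : ℝ, exp (-u ^ 2 / 2) * (2 * exp (a * |u|) - 1 - 2 * (a * |u|)) ^ N ≤
      √(π / (1 / 2 - 2 * N * a ^ 2)) := by
  rw [← integral_gaussian]
  refine integral_mono_of_nonneg (Filter.Eventually.of_forall fun u => ?_)
    (integrable_exp_neg_mul_sq hb) (Filter.Eventually.of_forall (integrand_le_gaussian N ha))
  have := one_le_two_mul_exp_sub_one_sub_two_mul (a * |u|)
  positivity

lemma one_sub_div_le_of_sqrt_le_integral {x p : ℝ} (hx : 0 < x) (hxp : x < p) (ha : 0 ≤ a)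
    (hc : √(2 * π * p / x) ≤
      ∫ u : ℝ, exp (-u ^ 2 / 2) * (2 * exp (a * |u|) - 1 - 2 * (a * |u|)) ^ N) :
    1 - x / p ≤ 4 * N * a ^ 2 := by
  by_contra! hlt
  have hp : 0 < p := hx.trans hxp
  have hxb : x < 2 * p * (1 / 2 - 2 * N * a ^ 2) := by
    rw [lt_sub_comm, div_lt_iff₀ hp] at hlt
    linarith
  have hb : 0 < 1 / 2 - 2 * N * a ^ 2 := by nlinarith
  have hsqrt : √(π / (1 / 2 - 2 * N * a ^ 2)) < √(2 * π * p / x) := by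
    refine sqrt_lt_sqrt (by positivity) ?_
    rw [div_lt_div_iff₀ hb hx]
    nlinarith [pi_pos]
  linarith [integral_le_sqrt_pi_div N ha hb]

end GaussianDomination

theorem stmt15_general (h_tot : ℝ) (hh : 0 < h_tot) (NT : ℕ)
    (x p_g : ℝ) (hx : 0 < x) (hxp : x < p_g)
    (τ : ℝ) (hτ : 0 < τ)
    (hc : Real.sqrt (2 * Real.pi * p_g / x) ≤
      ∫ u : ℝ, Real.exp (-u ^ 2 / 2) *
        (2 * Real.exp (h_tot * τ / NT * |u|) - 1 - 2 * (h_tot * τ / NT * |u|)) ^ NT) :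
    1 / (2 * h_tot) * Real.sqrt (NT * (1 - x / p_g)) ≤ τ := by
  rcases Nat.eq_zero_or_pos NT with rfl | hNT
  · simpa using hτ.le
  have hbound := one_sub_div_le_of_sqrt_le_integral NT hx hxp (by positivity) hc
  have hsq : NT * (1 - x / p_g) ≤ (2 * h_tot * τ) ^ 2 := by
    calc NT * (1 - x / p_g) ≤ NT * (4 * NT * (h_tot * τ / NT) ^ 2) := by gcongr
      _ = (2 * h_tot * τ) ^ 2 := by field_simp; ring
  rw [one_div_mul_eq_div, div_le_iff₀ (by positivity), mul_comm τ]
  exact (sqrt_le_left (by positivity)).mpr hsq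

/-- (Eq. (47): cost-induced lower bound on `τ`) Let `h_tot > 0`, `N_T` a positive integer,
and `0 < x < p_g ≤ 1`. Then every `τ > 0` satisfying `c(τ) ≥ √(2π·p_g/x)` also satisfies
`τ ≥ (1/(2·h_tot))·√(N_T·(1 − x/p_g))`, where
`c(τ) = ∫ e^{−u²/2}·(2·e^{(h_tot·τ/N_T)·|u|} − 1 − 2·(h_tot·τ/N_T)·|u|)^{N_T} du`. -/
theorem stmt15 (h_tot : ℝ) (hh : 0 < h_tot) (NT : ℕ) (hNT : 0 < NT)
    (x p_g : ℝ) (hx : 0 < x) (hxp : x < p_g) (hpg : p_g ≤ 1)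
    (τ : ℝ) (hτ : 0 < τ)
    (hc : Real.sqrt (2 * Real.pi * p_g / x) ≤
      ∫ u : ℝ, Real.exp (-u ^ 2 / 2) *
        (2 * Real.exp (h_tot * τ / NT * |u|) - 1 - 2 * (h_tot * τ / NT * |u|)) ^ NT) :
    1 / (2 * h_tot) * Real.sqrt (NT * (1 - x / p_g)) ≤ τ :=
  stmt15_general h_tot hh NT x p_g hx hxp τ hτ hc
end
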